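/- Let g: ℝ^{n-1} × ℝ → ℝ and U be functions, c, M > 0, and κ₀ = (3-a)/2 with a ∈ (-1,1). Assume: (i) U(x', g(x',t₀) + r, t₀) ≥ c r^{κ₀} for all t₀, all x', and r > 0 small; (ii) |U(x,t) - U(x,t₀)| ≤ M|t - t₀| for all x, t, t₀; (iii) U(x', xₙ, t) > 0 implies xₙ > g(x', t). Then |g(x',t) - g(x',t₀)| ≤ C|t - t₀|^{2/(3-a)} for |t - t₀| small, where C = (2M/c)^{2/(3-a)}. -/

import Mathlib

/-- Hölder continuity in time of the free-boundary graph `g`, from nondegeneracy of the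
solution, Lipschitz continuity in time, and the representation of the positivity set. -/
theorem stmt15 (m : ℕ) (a c M : ℝ) (ha : -1 < a) (ha' : a < 1) (hc : 0 < c) (hM : 0 < M)
    (g : (Fin m → ℝ) → ℝ → ℝ) (U : (Fin m → ℝ) → ℝ → ℝ → ℝ)
    (r₁ : ℝ) (hr₁ : 0 < r₁)
    -- (i) nondegeneracy: U(x', g(x',t₀) + r, t₀) ≥ c r^{κ₀} for small r > 0
    (hnondeg : ∀ (x' : Fin m → ℝ) (t₀ r : ℝ), 0 < r → r < r₁ →
      c * r ^ ((3 - a) / 2) ≤ U x' (g x' t₀ + r) t₀)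
    -- (ii) Lipschitz continuity in time
    (hLip : ∀ (x' : Fin m → ℝ) (xn t t₀ : ℝ), |U x' xn t - U x' xn t₀| ≤ M * |t - t₀|)
    -- (iii) positivity implies being above the graph
    (hpos : ∀ (x' : Fin m → ℝ) (xn t : ℝ), 0 < U x' xn t → g x' t < xn) :
    ∃ δ : ℝ, 0 < δ ∧ ∀ (x' : Fin m → ℝ) (t t₀ : ℝ), |t - t₀| ≤ δ →
      |g x' t - g x' t₀| ≤ (2 * M / c) ^ (2 / (3 - a)) * |t - t₀| ^ (2 / (3 - a)) := by
  have h3a : (0:ℝ) < 3 - a := by linarith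
  set e : ℝ := 2 / (3 - a) with he_def
  have he : 0 < e := by positivity
  set C : ℝ := (2 * M / c) ^ e with hC_def
  have hCpos : 0 < C := Real.rpow_pos_of_pos (by positivity) _
  refine ⟨(r₁ / (2 * C)) ^ (1 / e), Real.rpow_pos_of_pos (by positivity) _, ?_⟩
  intro x' t t₀ hδ
  have key : ∀ s u : ℝ, |s - u| ≤ (r₁ / (2 * C)) ^ (1 / e) → s ≠ u →
      g x' s - g x' u < C * |s - u| ^ e := by
    intro s u hsu hne
    set d : ℝ := |s - u| with hd
    have hd0 : 0 < d := abs_pos.mpr (sub_ne_zero.mpr hne)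
    set r : ℝ := C * d ^ e with hr_def
    have hde : 0 < d ^ e := Real.rpow_pos_of_pos hd0 _
    have hr0 : 0 < r := mul_pos hCpos hde
    have hδe : ((r₁ / (2 * C)) ^ (1 / e)) ^ e = r₁ / (2 * C) := by
      rw [one_div, Real.rpow_inv_rpow (by positivity) (ne_of_gt he)]
    have hrlt : r < r₁ := by
      have hle : d ^ e ≤ r₁ / (2 * C) := by
        rw [← hδe]; exact Real.rpow_le_rpow (abs_nonneg _) hsu he.le
      have h1 : r ≤ C * (r₁ / (2 * C)) := mul_le_mul_of_nonneg_left hle hCpos.le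
      have hCr : C * (r₁ / (2 * C)) = r₁ / 2 := by field_simp
      linarith
    have hek : e * ((3 - a) / 2) = 1 := by
      rw [he_def]; field_simp [h3a.ne']
    have hCk : C ^ ((3 - a) / 2) = 2 * M / c := by
      rw [hC_def, ← Real.rpow_mul (by positivity), hek, Real.rpow_one]
    have hdk : (d ^ e) ^ ((3 - a) / 2) = d := by
      rw [← Real.rpow_mul hd0.le, hek, Real.rpow_one]
    have hrk : c * r ^ ((3 - a) / 2) = 2 * M * d := by
      rw [hr_def, Real.mul_rpow hCpos.le hde.le, hCk, hdk]
      field_simp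
    have hU := hnondeg x' u r hr0 hrlt
    have hL := hLip x' (g x' u + r) s u
    rw [← hd] at hL
    have hL1 : -(M * d) ≤ U x' (g x' u + r) s - U x' (g x' u + r) u := (abs_le.mp hL).1
    have hUpos : 0 < U x' (g x' u + r) s := by
      have hMd : 0 < M * d := mul_pos hM hd0
      nlinarith
    have := hpos x' (g x' u + r) s hUpos
    linarith
  by_cases ht : t = t₀
  · subst ht
    simp [Real.zero_rpow (ne_of_gt he)]
  · have h1 := key t t₀ hδ ht
    have h2 := key t₀ t (by rwa [abs_sub_comm]) (Ne.symm ht)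
    rw [abs_sub_comm t₀ t] at h2
    have := abs_sub_lt_iff.mpr ⟨h1, h2⟩
    exact this.le
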